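/- Let 2 ≤ p < ∞ be fixed, and let (A_d), (B_d) be positive reals with lim_{d→∞} min{√d·A_d, d·B_d} = 0. Then lim_{d→∞} sup_{f ∈ C¹_d(A_d,B_d,D_p^d)} |∫_{D_p^d} f(x) dx − f(0)| = 0; in particular, the curse of dimensionality does not hold for the classes C¹_d(A_d,B_d,D_p^d). -/

import Mathlib

open MeasureTheory Filter
open scoped Pointwise ENNReal

noncomputable section

/-- The unit ball of `ℓ_p^d`, as a subset of Euclidean space. -/
def lpBall (d : ℕ) (p : ℝ) : Set (EuclideanSpace ℝ (Fin d)) :=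
  {x | ∑ i, |x i| ^ p ≤ 1}

/-- `α_{d,p} = vol_d(B_p^d)^{-1/d}`, the normalizing factor. -/
def alphadp (d : ℕ) (p : ℝ) : ℝ :=
  (volume (lpBall d p)).toReal ^ (-(1 / (d : ℝ)))

/-- The volume-normalized `ℓ_p`-ball `D_p^d = α_{d,p} · B_p^d`. -/
def lpNormalizedBall (d : ℕ) (p : ℝ) : Set (EuclideanSpace ℝ (Fin d)) :=
  alphadp d p • lpBall d p

/-- The worst-case error `sup_{f ∈ C¹_d(A,B,D_p^d)} |∫_{D_p^d} f(x) dx − f(0)|` of the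
algorithm `f ↦ f(0)` over the class of functions that are continuously differentiable on
`D_p^d` (witnessed by a derivative `g` within the set), bounded by `1`, `A`-Lipschitz, and
whose derivative is `B`-Lipschitz on `D_p^d`. -/
def worstError (d : ℕ) (p A B : ℝ) : ℝ :=
  sSup {v : ℝ |
    ∃ (f : EuclideanSpace ℝ (Fin d) → ℝ)
      (g : EuclideanSpace ℝ (Fin d) → (EuclideanSpace ℝ (Fin d) →L[ℝ] ℝ)),
      (∀ x ∈ lpNormalizedBall d p, HasFDerivWithinAt f (g x) (lpNormalizedBall d p) x) ∧
      ContinuousOn g (lpNormalizedBall d p) ∧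
      (∀ x ∈ lpNormalizedBall d p, |f x| ≤ 1) ∧
      (∀ x ∈ lpNormalizedBall d p, ∀ y ∈ lpNormalizedBall d p,
        |f x - f y| ≤ A * ‖x - y‖) ∧
      (∀ x ∈ lpNormalizedBall d p, ∀ y ∈ lpNormalizedBall d p,
        ‖g x - g y‖ ≤ B * ‖x - y‖) ∧
      v = |(∫ x in lpNormalizedBall d p, f x) - f 0|}

lemma lpSum_continuous (d : ℕ) {p : ℝ} (hp : 2 ≤ p) :
    Continuous (fun x : EuclideanSpace ℝ (Fin d) => ∑ i, |x i| ^ p) := by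
  refine continuous_finset_sum _ fun i _ => ?_
  exact (((continuous_apply i).comp (PiLp.continuous_ofLp 2 _)).abs).rpow_const (fun x => Or.inr (by linarith))

lemma lpBall_isClosed (d : ℕ) {p : ℝ} (hp : 2 ≤ p) : IsClosed (lpBall d p) :=
  isClosed_le (lpSum_continuous d hp) continuous_const

lemma lpBall_zero_mem (d : ℕ) {p : ℝ} (hp : 2 ≤ p) : (0 : EuclideanSpace ℝ (Fin d)) ∈ lpBall d p := by
  simp only [lpBall, Set.mem_setOf_eq]
  have : ∀ i : Fin d, |(0 : EuclideanSpace ℝ (Fin d)) i| ^ p = 0 := by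
    intro i
    simp [Real.zero_rpow (by positivity : p ≠ 0)]
  rw [Finset.sum_congr rfl (fun i _ => this i)]
  simp

lemma lpBall_neg_mem {d : ℕ} {p : ℝ} {x : EuclideanSpace ℝ (Fin d)} (hx : x ∈ lpBall d p) :
    -x ∈ lpBall d p := by
  simpa only [lpBall, Set.mem_setOf_eq, PiLp.neg_apply, abs_neg] using hx

lemma lpBall_convex (d : ℕ) {p : ℝ} (hp : 2 ≤ p) : Convex ℝ (lpBall d p) := by
  have hp1 : (1:ℝ) ≤ p := by linarith
  intro x hx y hy a b ha hb hab
  simp only [lpBall, Set.mem_setOf_eq] at hx hy ⊢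
  calc ∑ i, |(a • x + b • y) i| ^ p
      ≤ ∑ i, (a * |x i| + b * |y i|) ^ p := by
        refine Finset.sum_le_sum fun i _ => ?_
        refine Real.rpow_le_rpow (abs_nonneg _) ?_ (by linarith)
        simp only [PiLp.add_apply, PiLp.smul_apply, smul_eq_mul]
        calc |a * x i + b * y i| ≤ |a * x i| + |b * y i| := abs_add_le _ _
        _ = a * |x i| + b * |y i| := by
          rw [abs_mul, abs_mul, abs_of_nonneg ha, abs_of_nonneg hb]
    _ ≤ ∑ i, (a * |x i| ^ p + b * |y i| ^ p) := by
        refine Finset.sum_le_sum fun i _ => ?_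
        have := (convexOn_rpow hp1).2 (Set.mem_Ici.2 (abs_nonneg (x i)))
          (Set.mem_Ici.2 (abs_nonneg (y i))) ha hb hab
        simpa [smul_eq_mul] using this
    _ = a * (∑ i, |x i| ^ p) + b * (∑ i, |y i| ^ p) := by
        rw [Finset.sum_add_distrib, ← Finset.mul_sum, ← Finset.mul_sum]
    _ ≤ a * 1 + b * 1 := by
        gcongr
    _ = 1 := by linarith

lemma lpBall_norm_le (d : ℕ) {p : ℝ} (hp : 2 ≤ p) {x : EuclideanSpace ℝ (Fin d)}
    (hx : x ∈ lpBall d p) : ‖x‖ ≤ (d : ℝ) ^ ((1:ℝ)/2 - 1/p) := by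
  have hp0 : (0:ℝ) < p := by linarith
  have hq1 : (1:ℝ) ≤ p / 2 := by linarith
  have key : ∑ i, x i ^ 2 ≤ (d : ℝ) ^ (1 - 2/p) := by
    have h := Real.inner_le_weight_mul_Lp_of_nonneg Finset.univ hq1
      (fun _ : Fin d => (1:ℝ)) (fun i => x i ^ 2) (fun _ => zero_le_one)
      (fun i => sq_nonneg _)
    simp only [one_mul, Finset.sum_const, Finset.card_univ, Fintype.card_fin, nsmul_eq_mul,
      mul_one] at h
    have hrw : ∀ i : Fin d, (x i ^ 2) ^ (p/2) = |x i| ^ p := by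
      intro i
      rw [← sq_abs, ← Real.rpow_natCast |x i| 2, ← Real.rpow_mul (abs_nonneg _)]
      norm_num
      rw [show (2:ℝ) * (p/2) = p by ring]
    rw [Finset.sum_congr rfl (fun i _ => hrw i)] at h
    have h2 : (∑ i, |x i| ^ p) ^ (p/2)⁻¹ ≤ 1 := by
      refine Real.rpow_le_one (Finset.sum_nonneg fun i _ => Real.rpow_nonneg (abs_nonneg _) _)
        hx (by positivity)
    calc ∑ i, x i ^ 2 ≤ (d:ℝ) ^ (1 - (p/2)⁻¹) * (∑ i, |x i| ^ p) ^ (p/2)⁻¹ := h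
      _ ≤ (d:ℝ) ^ (1 - (p/2)⁻¹) * 1 := by
          refine mul_le_mul_of_nonneg_left h2 (Real.rpow_nonneg (Nat.cast_nonneg d) _)
      _ = (d:ℝ) ^ (1 - 2/p) := by
          rw [mul_one]
          congr 1
          ring
  have hnorm : ‖x‖ = Real.sqrt (∑ i, x i ^ 2) := by
    rw [EuclideanSpace.norm_eq]
    congr 1
    refine Finset.sum_congr rfl fun i _ => ?_
    rw [Real.norm_eq_abs, sq_abs]
  rw [hnorm]
  calc Real.sqrt (∑ i, x i ^ 2) ≤ Real.sqrt ((d:ℝ) ^ (1 - 2/p)) := Real.sqrt_le_sqrt key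
    _ = (d:ℝ) ^ ((1:ℝ)/2 - 1/p) := by
        rw [Real.sqrt_eq_rpow, ← Real.rpow_mul (Nat.cast_nonneg d)]
        congr 1
        ring


lemma cube_volume (d : ℕ) (a : ℝ) (ha : 0 ≤ a) :
    volume {x : EuclideanSpace ℝ (Fin d) | ∀ i, |x i| ≤ a} =
      (ENNReal.ofReal (2 * a)) ^ d := by
  have : {x : EuclideanSpace ℝ (Fin d) | ∀ i, |x i| ≤ a} =
      (MeasurableEquiv.toLp 2 (Fin d → ℝ)).symm ⁻¹'
        (Set.Icc (fun _ => -a) (fun _ => a)) := by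
    ext x
    simp only [Set.mem_setOf_eq, Set.mem_preimage, Set.mem_Icc, Pi.le_def]
    change (∀ i, |x.ofLp i| ≤ a) ↔ _
    constructor
    · intro h
      exact ⟨fun i => (abs_le.1 (h i)).1, fun i => (abs_le.1 (h i)).2⟩
    · intro h i
      exact abs_le.2 ⟨h.1 i, h.2 i⟩
  rw [this, (EuclideanSpace.volume_preserving_symm_measurableEquiv_toLp (Fin d)).measure_preimage
    measurableSet_Icc.nullMeasurableSet]
  rw [Real.volume_Icc_pi]
  simp [show a - -a = 2 * a by ring, Finset.prod_const]

lemma cube_subset_lpBall (d : ℕ) {p : ℝ} (hp : 2 ≤ p) (hd : 1 ≤ d) :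
    {x : EuclideanSpace ℝ (Fin d) | ∀ i, |x i| ≤ (d:ℝ) ^ (-(1/p))} ⊆ lpBall d p := by
  have hp0 : (0:ℝ) < p := by linarith
  have hd0 : (0:ℝ) < d := by exact_mod_cast hd
  intro x hx
  simp only [lpBall, Set.mem_setOf_eq]
  calc ∑ i, |x i| ^ p ≤ ∑ _i : Fin d, ((d:ℝ) ^ (-(1/p))) ^ p := by
        refine Finset.sum_le_sum fun i _ => ?_
        exact Real.rpow_le_rpow (abs_nonneg _) (hx i) hp0.le
    _ = (d:ℝ) * (d:ℝ)⁻¹ := by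
        rw [Finset.sum_const, Finset.card_univ, Fintype.card_fin, nsmul_eq_mul,
          ← Real.rpow_mul hd0.le]
        congr 1
        rw [show -(1/p) * p = -1 by field_simp, Real.rpow_neg_one]
    _ = 1 := by field_simp

lemma lpBall_volume_pos (d : ℕ) {p : ℝ} (hp : 2 ≤ p) (hd : 1 ≤ d) :
    0 < volume (lpBall d p) := by
  have hd0 : (0:ℝ) < d := by exact_mod_cast hd
  have ha : (0:ℝ) < (d:ℝ) ^ (-(1/p)) := Real.rpow_pos_of_pos hd0 _
  calc (0:ℝ≥0∞) < (ENNReal.ofReal (2 * (d:ℝ) ^ (-(1/p)))) ^ d := by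
        refine ENNReal.pow_pos ?_ d
        rw [ENNReal.ofReal_pos]; linarith
    _ = volume {x : EuclideanSpace ℝ (Fin d) | ∀ i, |x i| ≤ (d:ℝ) ^ (-(1/p))} :=
        (cube_volume d _ ha.le).symm
    _ ≤ volume (lpBall d p) := measure_mono (cube_subset_lpBall d hp hd)

lemma lpBall_subset_closedBall (d : ℕ) {p : ℝ} (hp : 2 ≤ p) :
    lpBall d p ⊆ Metric.closedBall 0 ((d : ℝ) ^ ((1:ℝ)/2 - 1/p)) := by
  intro x hx
  rw [Metric.mem_closedBall, dist_zero_right]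
  exact lpBall_norm_le d hp hx

lemma lpBall_volume_ne_top (d : ℕ) {p : ℝ} (hp : 2 ≤ p) :
    volume (lpBall d p) ≠ ⊤ := by
  refine ne_top_of_le_ne_top ?_ (measure_mono (lpBall_subset_closedBall d hp))
  exact measure_closedBall_lt_top.ne

lemma alphadp_pos (d : ℕ) {p : ℝ} (hp : 2 ≤ p) (hd : 1 ≤ d) : 0 < alphadp d p := by
  have h1 : 0 < (volume (lpBall d p)).toReal :=
    ENNReal.toReal_pos (lpBall_volume_pos d hp hd).ne' (lpBall_volume_ne_top d hp)
  exact Real.rpow_pos_of_pos h1 _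

lemma alphadp_le (d : ℕ) {p : ℝ} (hp : 2 ≤ p) (hd : 1 ≤ d) :
    alphadp d p ≤ (d:ℝ) ^ ((1:ℝ)/p) / 2 := by
  have hd0 : (0:ℝ) < d := by exact_mod_cast hd
  set a : ℝ := (d:ℝ) ^ (-(1/p)) with ha_def
  have ha : 0 < a := Real.rpow_pos_of_pos hd0 _
  have h2a : 0 < 2 * a := by linarith
  have hlow : (2*a) ^ d ≤ (volume (lpBall d p)).toReal := by
    have h1 : (ENNReal.ofReal (2*a)) ^ d ≤ volume (lpBall d p) := by
      rw [← cube_volume d a ha.le]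
      exact measure_mono (cube_subset_lpBall d hp hd)
    have := ENNReal.toReal_mono (lpBall_volume_ne_top d hp) h1
    rwa [← ENNReal.ofReal_pow h2a.le, ENNReal.toReal_ofReal (by positivity)] at this
  have hpow : (0:ℝ) < (2*a) ^ d := by positivity
  calc alphadp d p ≤ ((2*a) ^ d) ^ (-(1/(d:ℝ))) :=
        Real.rpow_le_rpow_of_nonpos hpow hlow (neg_nonpos.2 (by positivity))
    _ = (2*a)⁻¹ := by
        rw [← Real.rpow_natCast (2*a) d, ← Real.rpow_mul h2a.le]
        rw [show (d:ℝ) * -(1/(d:ℝ)) = -1 by field_simp, Real.rpow_neg_one]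
    _ = (d:ℝ) ^ ((1:ℝ)/p) / 2 := by
        rw [ha_def, mul_inv, ← Real.rpow_neg_one ((d:ℝ) ^ (-(1/p))), ← Real.rpow_mul hd0.le,
          show -(1/p) * (-1:ℝ) = 1/p by ring]
        ring


lemma lpBall_isCompact (d : ℕ) {p : ℝ} (hp : 2 ≤ p) : IsCompact (lpBall d p) :=
  Metric.isCompact_of_isClosed_isBounded (lpBall_isClosed d hp)
    (Metric.isBounded_closedBall.subset (lpBall_subset_closedBall d hp))

lemma lpNB_isCompact (d : ℕ) {p : ℝ} (hp : 2 ≤ p) : IsCompact (lpNormalizedBall d p) := by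
  rw [lpNormalizedBall, ← Set.image_smul]
  exact (lpBall_isCompact d hp).image (continuous_const_smul _)

lemma lpNB_measurable (d : ℕ) {p : ℝ} (hp : 2 ≤ p) : MeasurableSet (lpNormalizedBall d p) :=
  (lpNB_isCompact d hp).isClosed.measurableSet

lemma lpNB_convex (d : ℕ) {p : ℝ} (hp : 2 ≤ p) : Convex ℝ (lpNormalizedBall d p) :=
  (lpBall_convex d hp).smul _

lemma lpNB_zero_mem (d : ℕ) {p : ℝ} (hp : 2 ≤ p) :
    (0 : EuclideanSpace ℝ (Fin d)) ∈ lpNormalizedBall d p :=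
  ⟨0, lpBall_zero_mem d hp, smul_zero _⟩

lemma lpNB_neg_mem {d : ℕ} {p : ℝ} {x : EuclideanSpace ℝ (Fin d)}
    (hx : x ∈ lpNormalizedBall d p) : -x ∈ lpNormalizedBall d p := by
  obtain ⟨y, hy, rfl⟩ := hx
  exact ⟨-y, lpBall_neg_mem hy, by simp⟩

lemma lpNB_volume (d : ℕ) {p : ℝ} (hp : 2 ≤ p) (hd : 1 ≤ d) :
    volume (lpNormalizedBall d p) = 1 := by
  have hV0 := lpBall_volume_pos d hp hd
  have hVtop := lpBall_volume_ne_top d (p := p) hp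
  have ht : 0 < (volume (lpBall d p)).toReal := ENNReal.toReal_pos hV0.ne' hVtop
  have hd0 : (d:ℝ) ≠ 0 := by positivity
  rw [lpNormalizedBall, Measure.addHaar_smul_of_nonneg volume (alphadp_pos d hp hd).le,
    finrank_euclideanSpace_fin]
  have : alphadp d p ^ d = (volume (lpBall d p)).toReal⁻¹ := by
    rw [alphadp, ← Real.rpow_natCast ((volume (lpBall d p)).toReal ^ (-(1/(d:ℝ)))) d,
      ← Real.rpow_mul ht.le, show -(1/(d:ℝ)) * (d:ℕ) = -1 by field_simp,
      Real.rpow_neg_one]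
  rw [this, ENNReal.ofReal_inv_of_pos ht, ENNReal.ofReal_toReal hVtop]
  exact ENNReal.inv_mul_cancel hV0.ne' hVtop

lemma lpNB_subset (d : ℕ) {p : ℝ} (hp : 2 ≤ p) (hd : 1 ≤ d) {x : EuclideanSpace ℝ (Fin d)}
    (hx : x ∈ lpNormalizedBall d p) : ‖x‖ ≤ Real.sqrt d / 2 := by
  obtain ⟨y, hy, rfl⟩ := hx
  have hd0 : (0:ℝ) < d := by exact_mod_cast hd
  have h1 : ‖alphadp d p • y‖ = alphadp d p * ‖y‖ := by
    rw [norm_smul, Real.norm_eq_abs, abs_of_pos (alphadp_pos d hp hd)]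
  rw [h1]
  calc alphadp d p * ‖y‖ ≤ ((d:ℝ) ^ ((1:ℝ)/p) / 2) * ((d:ℝ) ^ ((1:ℝ)/2 - 1/p)) := by
        exact mul_le_mul (alphadp_le d hp hd) (lpBall_norm_le d hp hy) (norm_nonneg _)
          (by positivity)
    _ = Real.sqrt d / 2 := by
        rw [Real.sqrt_eq_rpow, div_mul_eq_mul_div, ← Real.rpow_add hd0,
          show (1:ℝ)/p + ((1:ℝ)/2 - 1/p) = 1/2 by ring]

-- integral of a linear functional over the normalized ball vanishes
lemma integral_linear_lpNB (d : ℕ) {p : ℝ} (hp : 2 ≤ p)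
    (L : EuclideanSpace ℝ (Fin d) →L[ℝ] ℝ) :
    ∫ x in lpNormalizedBall d p, L x = 0 := by
  set D := lpNormalizedBall d p with hD
  have hDm : MeasurableSet D := lpNB_measurable d hp
  have h1 : ∫ x, D.indicator (fun y => L y) x = ∫ x in D, L x :=
    integral_indicator hDm
  have h2 : ∀ x, D.indicator (fun y => L y) (-x) = - D.indicator (fun y => L y) x := by
    intro x
    by_cases hx : x ∈ D
    · rw [Set.indicator_of_mem (lpNB_neg_mem hx), Set.indicator_of_mem hx, map_neg]
    · rw [Set.indicator_of_notMem hx, Set.indicator_of_notMem (fun h => hx ?_), neg_zero]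
      simpa using lpNB_neg_mem h
  have h3 : ∫ x, D.indicator (fun y => L y) (-x) = ∫ x, D.indicator (fun y => L y) x :=
    integral_neg_eq_self _ _
  rw [← h1]
  have h4 : ∫ x, D.indicator (fun y => L y) (-x)
      = - ∫ x, D.indicator (fun y => L y) x := by
    simp_rw [h2]
    exact integral_neg _
  linarith [h3, h4]


lemma errBound (d : ℕ) {p A B : ℝ} (hp : 2 ≤ p) (hd : 1 ≤ d) (hA : 0 < A) (hB : 0 < B)
    {v : ℝ}
    (hv : ∃ (f : EuclideanSpace ℝ (Fin d) → ℝ)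
      (g : EuclideanSpace ℝ (Fin d) → (EuclideanSpace ℝ (Fin d) →L[ℝ] ℝ)),
      (∀ x ∈ lpNormalizedBall d p, HasFDerivWithinAt f (g x) (lpNormalizedBall d p) x) ∧
      ContinuousOn g (lpNormalizedBall d p) ∧
      (∀ x ∈ lpNormalizedBall d p, |f x| ≤ 1) ∧
      (∀ x ∈ lpNormalizedBall d p, ∀ y ∈ lpNormalizedBall d p,
        |f x - f y| ≤ A * ‖x - y‖) ∧
      (∀ x ∈ lpNormalizedBall d p, ∀ y ∈ lpNormalizedBall d p,
        ‖g x - g y‖ ≤ B * ‖x - y‖) ∧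
      v = |(∫ x in lpNormalizedBall d p, f x) - f 0|) :
    v ≤ min (Real.sqrt d * A) (d * B) := by
  obtain ⟨f, g, hdiff, hgc, hbd, hlip, hglip, hv⟩ := hv
  set D := lpNormalizedBall d p with hDdef
  set R : ℝ := Real.sqrt d / 2 with hRdef
  have hR0 : 0 ≤ R := by positivity
  have h0D : (0 : EuclideanSpace ℝ (Fin d)) ∈ D := lpNB_zero_mem d hp
  have hvol : volume D = 1 := lpNB_volume d hp hd
  have hvfin : volume D < ⊤ := by rw [hvol]; exact ENNReal.one_lt_top
  have hvtoReal : (volume D).toReal = 1 := by rw [hvol]; simp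
  have hDm : MeasurableSet D := lpNB_measurable d hp
  have hfc : ContinuousOn f D := fun x hx => (hdiff x hx).continuousWithinAt
  have hIf : IntegrableOn f D volume := hfc.integrableOn_compact (lpNB_isCompact d hp)
  have hIc : IntegrableOn (fun _ => f 0) D volume := integrableOn_const hvfin.ne
  -- first bound
  have key1 : |(∫ x in D, f x) - f 0| ≤ A * R := by
    have : (∫ x in D, f x) - f 0 = ∫ x in D, (f x - f 0) := by
      rw [integral_sub hIf hIc, setIntegral_const, measureReal_def, hvtoReal, one_smul]
    rw [this, ← Real.norm_eq_abs]
    have := norm_setIntegral_le_of_norm_le_const hvfin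
      (f := fun x => f x - f 0) (C := A * R) (fun x hx => by
        rw [Real.norm_eq_abs]
        calc |f x - f 0| ≤ A * ‖x - 0‖ := hlip x hx 0 h0D
          _ = A * ‖x‖ := by rw [sub_zero]
          _ ≤ A * R := by
            exact mul_le_mul_of_nonneg_left (lpNB_subset d hp hd hx) hA.le)
    simpa [measureReal_def, hvtoReal] using this
  -- second bound
  have key2 : |(∫ x in D, f x) - f 0| ≤ B * R * R := by
    have hL0 : ∫ x in D, (g 0) x = 0 := integral_linear_lpNB d hp (g 0)
    have hIL : IntegrableOn (fun x => (g 0) x) D volume :=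
      ((g 0).continuous.continuousOn).integrableOn_compact (lpNB_isCompact d hp)
    have taylor : ∀ x ∈ D, |f x - f 0 - (g 0) x| ≤ (B * R) * ‖x‖ := by
      intro x hx
      have hbound : ∀ z ∈ D, ‖g z - g 0‖ ≤ B * R := by
        intro z hz
        calc ‖g z - g 0‖ ≤ B * ‖z - 0‖ := hglip z hz 0 h0D
          _ = B * ‖z‖ := by rw [sub_zero]
          _ ≤ B * R := mul_le_mul_of_nonneg_left (lpNB_subset d hp hd hz) hB.le
      have := (lpNB_convex d hp).norm_image_sub_le_of_norm_hasFDerivWithin_le'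
        hdiff hbound h0D hx
      simpa [Real.norm_eq_abs] using this
    have hIfc : IntegrableOn (fun x => f x - f 0) D volume := hIf.sub hIc
    have heq : (∫ x in D, f x) - f 0 = ∫ x in D, (f x - f 0 - (g 0) x) := by
      rw [integral_sub hIfc hIL, integral_sub hIf hIc, setIntegral_const,
        measureReal_def, hvtoReal, one_smul, hL0, sub_zero]
    rw [heq, ← Real.norm_eq_abs]
    have := norm_setIntegral_le_of_norm_le_const hvfin
      (f := fun x => f x - f 0 - (g 0) x) (C := B * R * R) (fun x hx => by
        rw [Real.norm_eq_abs]
        calc |f x - f 0 - (g 0) x| ≤ (B * R) * ‖x‖ := taylor x hx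
          _ ≤ (B * R) * R := by
            exact mul_le_mul_of_nonneg_left (lpNB_subset d hp hd hx) (by positivity))
    simpa [measureReal_def, hvtoReal] using this
  have hsq : R * R ≤ (d : ℝ) := by
    rw [hRdef]
    have h1 : Real.sqrt d * Real.sqrt d = (d:ℝ) :=
      Real.mul_self_sqrt (Nat.cast_nonneg d)
    nlinarith [Real.sqrt_nonneg (d:ℝ), Nat.cast_nonneg (α := ℝ) d]
  refine le_min ?_ ?_
  · calc v = |(∫ x in D, f x) - f 0| := hv
      _ ≤ A * R := key1
      _ ≤ Real.sqrt d * A := by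
        rw [hRdef]
        rw [mul_comm]
        nlinarith [Real.sqrt_nonneg (d:ℝ)]
  · calc v = |(∫ x in D, f x) - f 0| := hv
      _ ≤ B * R * R := key2
      _ ≤ (d:ℝ) * B := by nlinarith
end


lemma zero_mem_errSet (d : ℕ) (p A B : ℝ) (hA : 0 < A) (hB : 0 < B) :
    (0:ℝ) ∈ {v : ℝ |
    ∃ (f : EuclideanSpace ℝ (Fin d) → ℝ)
      (g : EuclideanSpace ℝ (Fin d) → (EuclideanSpace ℝ (Fin d) →L[ℝ] ℝ)),
      (∀ x ∈ lpNormalizedBall d p, HasFDerivWithinAt f (g x) (lpNormalizedBall d p) x) ∧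
      ContinuousOn g (lpNormalizedBall d p) ∧
      (∀ x ∈ lpNormalizedBall d p, |f x| ≤ 1) ∧
      (∀ x ∈ lpNormalizedBall d p, ∀ y ∈ lpNormalizedBall d p,
        |f x - f y| ≤ A * ‖x - y‖) ∧
      (∀ x ∈ lpNormalizedBall d p, ∀ y ∈ lpNormalizedBall d p,
        ‖g x - g y‖ ≤ B * ‖x - y‖) ∧
      v = |(∫ x in lpNormalizedBall d p, f x) - f 0|} := by
  refine ⟨fun _ => 0, fun _ => 0, ?_, continuousOn_const, ?_, ?_, ?_, ?_⟩
  · intro x _; exact hasFDerivWithinAt_const 0 x _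
  · intro x _; simp
  · intro x _ y _; simp only [sub_self, abs_zero]; exact mul_nonneg hA.le (norm_nonneg _)
  · intro x _ y _; simp only [sub_self, norm_zero]; exact mul_nonneg hB.le (norm_nonneg _)
  · simp


theorem stmt13 (p : ℝ) (hp : 2 ≤ p)
    (A B : ℕ → ℝ) (hA : ∀ d, 0 < A d) (hB : ∀ d, 0 < B d)
    (hlim : Tendsto (fun d : ℕ => min (Real.sqrt d * A d) (d * B d)) atTop (nhds 0)) :
    Tendsto (fun d : ℕ => worstError d p (A d) (B d)) atTop (nhds 0) := by
  refine tendsto_of_tendsto_of_tendsto_of_le_of_le' (tendsto_const_nhds (x := (0:ℝ))) hlim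
    ?_ ?_
  · filter_upwards [eventually_ge_atTop 1] with d hd
    refine Real.sSup_nonneg' ?_
    exact ⟨0, zero_mem_errSet d p (A d) (B d) (hA d) (hB d), le_rfl⟩
  · filter_upwards [eventually_ge_atTop 1] with d hd
    refine Real.sSup_le (fun v hv => errBound d hp hd (hA d) (hB d) hv) ?_
    have h1 : 0 ≤ Real.sqrt d * A d := mul_nonneg (Real.sqrt_nonneg _) (hA d).le
    have h2 : 0 ≤ (d:ℝ) * B d := mul_nonneg (Nat.cast_nonneg _) (hB d).le
    exact le_min h1 h2
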